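/- Let (X_i)_{i∈ι} be a family of Lip-spaces. The family is uniform if and only if the following two conditions hold: (a) there exists a constant R > 0 such that ‖x‖ ≤ R‖x‖_L for every i ∈ ι and every x ∈ X_i; and (b) for every ε > 0 there exists N_ε ∈ ℕ such that every member X_i has a linear subspace V ⊆ X_i of dimension at most N_ε such that the set {x ∈ V : ‖x‖_L ≤ 1} is ε-dense (in the norm ‖·‖) in the set {x ∈ X_i : ‖x‖_L ≤ 1}. -/

import Mathlib

/-!
If the Lip-unit balls have uniformly bounded covering numbers, (a) holds because these balls are
star-shaped about `0`: were `‖x‖ > 2(n+1)` for some `x` in a ball covered by `n` balls of radius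
`1`, the points `(k/(n+1)) • x`, `k ≤ n`, would be pairwise more than `2` apart, and two of them
would share a ball. (b) holds because an `ε/2`-net may be taken inside the unit ball, and its
span has dimension at most its size.

Conversely, by (a) the Lip-unit ball of an `N`-dimensional subspace `V` as in (b) lies in the
norm ball of radius `R`. Comparing Haar volumes of disjoint balls, a `δ`-separated subset of that
ball has at most `(1 + 2R/δ)^N` points, and a maximal one is a `δ`-net. As `V` is `δ`-dense, this
is a `2δ`-net of the whole Lip-unit ball.
-/

open scoped ENNReal

/-- A Lip-space: a real Banach space `X` together with an extended-real-valued "Lip-norm"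
`lipNorm : X → [0,∞]` which is finite on a dense linear subspace on which it is a norm
(subadditive, absolutely homogeneous, vanishing only at `0`), and whose unit ball
`{x : X | lipNorm x ≤ 1}` is compact in the norm topology of `X`. -/
structure LipSpace (X : Type*) [NormedAddCommGroup X] [NormedSpace ℝ X] [CompleteSpace X] where
  lipNorm : X → ℝ≥0∞
  lipNorm_add_le : ∀ x y : X, lipNorm (x + y) ≤ lipNorm x + lipNorm y
  lipNorm_smul : ∀ (c : ℝ) (x : X), lipNorm (c • x) = (‖c‖₊ : ℝ≥0∞) * lipNorm x
  lipNorm_eq_zero : ∀ x : X, lipNorm x = 0 → x = 0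
  dense_finite : Dense {x : X | lipNorm x < ⊤}
  isCompact_unitBall : IsCompact {x : X | lipNorm x ≤ 1}

open Metric Module Set MeasureTheory
open scoped NNReal

namespace Metric

variable {V : Type*} [NormedAddCommGroup V] [NormedSpace ℝ V] [FiniteDimensional ℝ V]

theorem IsSeparated.card_le_of_subset_closedBall {s : Finset V} {x : V} {R : ℝ} {δ : ℝ≥0}
    (hδ : 0 < δ) (hR : 0 ≤ R) (hsep : IsSeparated δ (s : Set V))
    (hs : (s : Set V) ⊆ closedBall x R) :
    (s.card : ℝ) ≤ (1 + 2 * R / δ) ^ finrank ℝ V := by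
  borelize V
  let μ : Measure V := Measure.addHaar
  have hδ2 : (0 : ℝ) < δ / 2 := by positivity
  have hdisj : (s : Set V).PairwiseDisjoint (ball · (δ / 2)) := fun a ha b hb hab => by
    refine ball_disjoint_ball ?_
    have : (δ : ℝ≥0∞) < edist a b := hsep ha hb hab
    rw [edist_nndist, ENNReal.coe_lt_coe, ← NNReal.coe_lt_coe, coe_nndist] at this
    linarith
  have hsub : (⋃ a ∈ s, ball a (δ / 2)) ⊆ ball x (R + δ / 2) :=
    iUnion₂_subset fun a ha => ball_subset_ball' (by linarith [mem_closedBall.1 (hs ha)])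
  have hvol : (s.card : ℝ≥0∞) * ENNReal.ofReal ((δ / 2) ^ finrank ℝ V) * μ (ball 0 1) ≤
      ENNReal.ofReal ((R + δ / 2) ^ finrank ℝ V) * μ (ball 0 1) := calc
    _ = μ (⋃ a ∈ s, ball a (δ / 2)) := by
      rw [measure_biUnion_finset hdisj fun a _ => measurableSet_ball]
      simp only [μ.addHaar_ball_of_pos _ hδ2, Finset.sum_const, nsmul_eq_mul, mul_assoc]
    _ ≤ μ (ball x (R + δ / 2)) := measure_mono hsub
    _ = _ := μ.addHaar_ball_of_pos _ (by positivity)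
  have := ENNReal.toReal_le_of_le_ofReal (by positivity)
    ((ENNReal.mul_le_mul_iff_left (measure_ball_pos μ _ one_pos).ne'
      measure_ball_lt_top.ne).1 hvol)
  rw [ENNReal.toReal_mul, ENNReal.toReal_ofReal (by positivity), ENNReal.toReal_natCast,
    ← le_div_iff₀ (by positivity), ← div_pow] at this
  have hδ0 : (δ : ℝ) ≠ 0 := by positivity
  rwa [show (R + δ / 2) / (δ / 2) = 1 + 2 * R / δ by field_simp; ring] at this

theorem packingNumber_le_of_subset_closedBall {A : Set V} {x : V} {R : ℝ} {δ : ℝ≥0}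
    (hδ : 0 < δ) (hR : 0 ≤ R) (hA : A ⊆ closedBall x R) :
    packingNumber δ A ≤ ⌊(1 + 2 * R / δ) ^ finrank ℝ V⌋₊ := by
  refine iSup₂_le fun C hCA => iSup_le fun hC => ?_
  by_contra! hlt
  obtain ⟨D, hDC, hD⟩ := exists_subset_encard_eq (Order.add_one_le_of_lt hlt)
  have hDfin : D.Finite := finite_of_encard_eq_coe hD
  have hcard := IsSeparated.card_le_of_subset_closedBall (s := hDfin.toFinset) hδ hR
    (by simpa using hC.subset hDC) (by simpa using hDC.trans (hCA.trans hA))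
  rw [hDfin.encard_eq_coe_toFinset_card, ← ENat.natCast_one, ← ENat.natCast_add,
    ENat.natCast_inj] at hD
  have := Nat.le_floor hcard
  omega

theorem exists_finset_card_le_of_subset_closedBall {A : Set V} {x : V} {R δ : ℝ}
    (hδ : 0 < δ) (hR : 0 ≤ R) (hA : A ⊆ closedBall x R) :
    ∃ s : Finset V, s.card ≤ ⌊(1 + 2 * R / δ) ^ finrank ℝ V⌋₊ ∧
      A ⊆ ⋃ a ∈ s, closedBall a δ := by
  lift δ to ℝ≥0 using hδ.le
  have hP := packingNumber_le_of_subset_closedBall (by exact_mod_cast hδ) hR hA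
  have hP' : packingNumber δ A ≠ ⊤ := ne_top_of_le_ne_top (by simp) hP
  have hcard := (encard_maximalSeparatedSet hP').trans_le hP
  have hfin : (maximalSeparatedSet δ A).Finite := finite_of_encard_le_coe hcard
  refine ⟨hfin.toFinset, ?_, ?_⟩
  · rwa [hfin.encard_eq_coe_toFinset_card, Nat.cast_le] at hcard
  · simpa using (isCover_maximalSeparatedSet hP').subset_iUnion_closedBall

end Metric

theorem norm_le_of_starConvex_subset_biUnion_closedBall {E : Type*} [SeminormedAddCommGroup E]
    [NormedSpace ℝ E] {K : Set E} (hK : StarConvex ℝ 0 K) {t : Finset E} {r : ℝ}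
    (hKt : K ⊆ ⋃ c ∈ t, closedBall c r) {x : E} (hx : x ∈ K) :
    ‖x‖ ≤ 2 * r * (t.card + 1) := by
  set n := t.card
  let p : Fin (n + 1) → E := fun k => ((k : ℝ) / (n + 1)) • x
  have hcenter : ∀ k, ∃ c : t, dist (p k) c ≤ r := fun k => by
    have hk : (k : ℝ) ≤ n + 1 := by exact_mod_cast k.2.le
    obtain ⟨c, hc, hpc⟩ := mem_iUnion₂.1 (hKt (hK.smul_mem hx (by positivity)
      (div_le_one_of_le₀ hk (by positivity))))
    exact ⟨⟨c, hc⟩, hpc⟩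
  choose f hf using hcenter
  obtain ⟨k, l, hkl, hfkl⟩ := Fintype.exists_ne_map_eq_of_card_lt f (by simp [n])
  have hdist_le : dist (p k) (p l) ≤ 2 * r := by
    have hk := hf k
    rw [hfkl] at hk
    linarith [dist_triangle_right (p k) (p l) (f l), hf l]
  have hkl_abs : 1 ≤ |(k : ℝ) - l| := by
    have : ((k : ℕ) : ℤ) - (l : ℕ) ≠ 0 :=
      sub_ne_zero.2 (by exact_mod_cast Fin.val_ne_of_ne hkl)
    exact_mod_cast Int.one_le_abs this
  have hdist_eq : dist (p k) (p l) = |(k : ℝ) - l| / (n + 1) * ‖x‖ := by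
    rw [dist_eq_norm, ← sub_smul, norm_smul, ← sub_div, Real.norm_eq_abs, abs_div,
      abs_of_pos (by positivity : (0 : ℝ) < n + 1)]
  rw [hdist_eq, div_mul_eq_mul_div, div_le_iff₀ (by positivity)] at hdist_le
  nlinarith [norm_nonneg x]

theorem exists_finset_subset_card_le_of_subset_biUnion_closedBall {X : Type*}
    [PseudoMetricSpace X] {A : Set X} {t : Finset X} {r : ℝ}
    (hA : A ⊆ ⋃ c ∈ t, closedBall c r) :
    ∃ s : Finset X, ↑s ⊆ A ∧ s.card ≤ t.card ∧ A ⊆ ⋃ a ∈ s, closedBall a (2 * r) := by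
  classical
  choose! g hg using fun c (h : (A ∩ closedBall c r).Nonempty) => h
  refine ⟨(t.filter fun c => (A ∩ closedBall c r).Nonempty).image g, ?_,
    Finset.card_image_le.trans (Finset.card_filter_le _ _), fun x hx => ?_⟩
  · simp only [Finset.coe_image, Finset.coe_filter, image_subset_iff]
    exact fun c hc => (hg c hc.2).1
  · obtain ⟨c, hc, hxc⟩ := mem_iUnion₂.1 (hA hx)
    have hne : (A ∩ closedBall c r).Nonempty := ⟨x, hx, hxc⟩
    refine mem_iUnion₂.2 ⟨g c, Finset.mem_image_of_mem _ (Finset.mem_filter.2 ⟨hc, hne⟩), ?_⟩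
    rw [mem_closedBall] at hxc ⊢
    linarith [dist_triangle x c (g c), mem_closedBall'.1 (hg c hne).2]

theorem exists_submodule_finrank_le_of_subset_biUnion_closedBall {E : Type*}
    [NormedAddCommGroup E] [NormedSpace ℝ E] {K : Set E} {t : Finset E} {r : ℝ}
    (hK : K ⊆ ⋃ c ∈ t, closedBall c r) :
    ∃ V : Submodule ℝ E, FiniteDimensional ℝ V ∧ finrank ℝ V ≤ t.card ∧
      ∀ x ∈ K, ∃ y ∈ V, y ∈ K ∧ ‖x - y‖ ≤ 2 * r := by
  obtain ⟨s, hsK, hst, hscov⟩ := exists_finset_subset_card_le_of_subset_biUnion_closedBall hK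
  refine ⟨Submodule.span ℝ s, inferInstance, (finrank_span_finset_le_card s).trans hst,
    fun x hx => ?_⟩
  obtain ⟨a, ha, hxa⟩ := mem_iUnion₂.1 (hscov hx)
  exact ⟨a, Submodule.subset_span ha, hsK ha, by rwa [← dist_eq_norm, ← mem_closedBall]⟩

namespace LipSpace

variable {E : Type*} [NormedAddCommGroup E] [NormedSpace ℝ E] [CompleteSpace E] (L : LipSpace E)

theorem starConvex_unitBall : StarConvex ℝ 0 {x | L.lipNorm x ≤ 1} :=
  starConvex_zero_iff.2 fun x hx a ha₀ ha₁ => by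
    show L.lipNorm (a • x) ≤ 1
    rw [L.lipNorm_smul, ← one_mul 1]
    refine mul_le_mul' ?_ hx
    rwa [ENNReal.coe_le_one_iff, ← NNReal.coe_le_one, coe_nnnorm, Real.norm_of_nonneg ha₀]

theorem enorm_le_mul_lipNorm_iff {R : ℝ} (hR : 0 < R) :
    (∀ x, (‖x‖₊ : ℝ≥0∞) ≤ ENNReal.ofReal R * L.lipNorm x) ↔
      ∀ x, L.lipNorm x ≤ 1 → ‖x‖ ≤ R := by
  refine ⟨fun h x hx => ?_, fun h x => ?_⟩
  · have := (h x).trans (mul_le_of_le_one_right' hx)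
    rwa [← enorm_eq_nnnorm, ← ofReal_norm, ENNReal.ofReal_le_ofReal_iff hR.le] at this
  rcases eq_or_ne (L.lipNorm x) 0 with h0 | h0
  · simp [L.lipNorm_eq_zero x h0]
  rcases eq_or_ne (L.lipNorm x) ⊤ with htop | htop
  · simp [htop, ENNReal.mul_top, hR]
  set c := (L.lipNorm x).toReal
  have hc : 0 < c := ENNReal.toReal_pos h0 htop
  have hx := h (c⁻¹ • x) <| by
    rw [L.lipNorm_smul, ← enorm_eq_nnnorm, ← ofReal_norm, norm_inv,
      Real.norm_of_nonneg hc.le, ENNReal.ofReal_inv_of_pos hc, ENNReal.ofReal_toReal htop,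
      ENNReal.inv_mul_cancel h0 htop]
  rw [norm_smul, norm_inv, Real.norm_of_nonneg hc.le, inv_mul_le_iff₀ hc] at hx
  calc (‖x‖₊ : ℝ≥0∞) = ENNReal.ofReal ‖x‖ := by rw [ofReal_norm, enorm_eq_nnnorm]
    _ ≤ ENNReal.ofReal (R * c) := ENNReal.ofReal_le_ofReal (by linarith)
    _ = ENNReal.ofReal R * L.lipNorm x := by
      rw [ENNReal.ofReal_mul hR.le, ENNReal.ofReal_toReal htop]

end LipSpace

theorem exists_finset_card_le_of_forall_exists_mem_submodule {E : Type*}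
    [NormedAddCommGroup E] [NormedSpace ℝ E] {K : Set E} {R δ : ℝ} (hδ : 0 < δ) (hR : 0 ≤ R)
    (hK : K ⊆ closedBall 0 R) (V : Submodule ℝ E) [FiniteDimensional ℝ V]
    (hV : ∀ x ∈ K, ∃ y ∈ V, y ∈ K ∧ ‖x - y‖ ≤ δ) :
    ∃ t : Finset E, t.card ≤ ⌊(1 + 2 * R / δ) ^ finrank ℝ V⌋₊ ∧
      K ⊆ ⋃ c ∈ t, closedBall c (2 * δ) := by
  classical
  obtain ⟨s, hs, hsK⟩ := exists_finset_card_le_of_subset_closedBall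
    (A := {y : V | (y : E) ∈ K}) (x := 0) hδ hR fun y hy => by simpa using hK hy
  refine ⟨s.image (↑), Finset.card_image_le.trans hs, fun x hx => ?_⟩
  obtain ⟨y, hyV, hyK, hxy⟩ := hV x hx
  obtain ⟨a, ha, hya⟩ := mem_iUnion₂.1 (hsK (show (⟨y, hyV⟩ : V) ∈ _ from hyK))
  refine mem_iUnion₂.2 ⟨a, Finset.mem_image_of_mem _ ha, ?_⟩
  calc dist x a ≤ dist x y + dist y a := dist_triangle ..
    _ ≤ δ + δ := add_le_add (by rwa [dist_eq_norm]) hya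
    _ = 2 * δ := by ring

/-- A family `(X_i)_{i ∈ ι}` of Lip-spaces is uniform (for every `ε > 0`
there is `n_ε` such that each Lip-unit ball can be covered by `n_ε` norm-balls of radius
`ε`) if and only if: (a) there is a constant `R > 0` with `‖x‖ ≤ R ‖x‖_L` for all `i` and
all `x ∈ X_i`, and (b) for every `ε > 0` there is `N_ε ∈ ℕ` such that each `X_i` has a
linear subspace `V` of dimension at most `N_ε` whose Lip-unit ball
`{x ∈ V : ‖x‖_L ≤ 1}` is `ε`-dense in `{x ∈ X_i : ‖x‖_L ≤ 1}`. -/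
theorem stmt6 {ι : Type*} (X : ι → Type*) [∀ i, NormedAddCommGroup (X i)]
    [∀ i, NormedSpace ℝ (X i)] [∀ i, CompleteSpace (X i)] (S : ∀ i, LipSpace (X i)) :
    (∀ ε : ℝ, 0 < ε → ∃ n : ℕ, ∀ i, ∃ t : Finset (X i), t.card ≤ n ∧
        {x : X i | (S i).lipNorm x ≤ 1} ⊆ ⋃ c ∈ t, Metric.closedBall c ε) ↔
      ((∃ R : ℝ, 0 < R ∧ ∀ i, ∀ x : X i,
          (‖x‖₊ : ℝ≥0∞) ≤ ENNReal.ofReal R * (S i).lipNorm x) ∧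
        (∀ ε : ℝ, 0 < ε → ∃ N : ℕ, ∀ i, ∃ V : Submodule ℝ (X i),
          FiniteDimensional ℝ V ∧ Module.finrank ℝ V ≤ N ∧
          ∀ x : X i, (S i).lipNorm x ≤ 1 →
            ∃ y ∈ V, (S i).lipNorm y ≤ 1 ∧ ‖x - y‖ ≤ ε)) := by
  constructor
  · intro H
    refine ⟨?_, fun ε hε => ?_⟩
    · obtain ⟨n, hn⟩ := H 1 one_pos
      refine ⟨2 * (n + 1), by positivity, fun i => ((S i).enorm_le_mul_lipNorm_iff
        (by positivity)).2 fun x hx => ?_⟩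
      obtain ⟨t, ht, hcov⟩ := hn i
      calc ‖x‖ ≤ 2 * 1 * (t.card + 1) :=
            norm_le_of_starConvex_subset_biUnion_closedBall (S i).starConvex_unitBall hcov hx
        _ ≤ 2 * (n + 1) := by rw [mul_one]; gcongr
    · obtain ⟨n, hn⟩ := H (ε / 2) (half_pos hε)
      refine ⟨n, fun i => ?_⟩
      obtain ⟨t, ht, hcov⟩ := hn i
      obtain ⟨V, hV, hVt, hVK⟩ := exists_submodule_finrank_le_of_subset_biUnion_closedBall hcov
      rw [mul_div_cancel₀ _ two_ne_zero] at hVK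
      exact ⟨V, hV, hVt.trans ht, hVK⟩
  · rintro ⟨⟨R, hR, hnorm⟩, hdense⟩ ε hε
    obtain ⟨N, hN⟩ := hdense (ε / 2) (half_pos hε)
    refine ⟨⌊(1 + 2 * R / (ε / 2)) ^ N⌋₊, fun i => ?_⟩
    obtain ⟨V, hV, hVN, hVK⟩ := hN i
    have hKR := ((S i).enorm_le_mul_lipNorm_iff hR).1 (hnorm i)
    obtain ⟨t, ht, hcov⟩ := exists_finset_card_le_of_forall_exists_mem_submodule (half_pos hε)
      hR.le (fun x hx => mem_closedBall_zero_iff.2 (hKR x hx)) V hVK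
    refine ⟨t, ht.trans (Nat.floor_le_floor (pow_le_pow_right₀ ?_ hVN)), ?_⟩
    · have : 0 ≤ 2 * R / (ε / 2) := by positivity
      linarith
    · rwa [mul_div_cancel₀ _ two_ne_zero] at hcov
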